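/- arXiv:1508.01550 — 3 statements merged into one kernel-verified Lean document; each statement's English description precedes it below -/
import Mathlib

section
/- Let d ≥ 1 be an integer, μ > 0, 0 < β < 1, 0 < γ < 1 with β + γ > 1, κ = 2β/(2β+γ−1) and α_c = 1/(2β+γ−1), and let a : ℝ^d → [0,∞) be bounded, measurable, compactly supported and continuous at 0. Then for every t > 0 and x ∈ ℝ^d: lim_{ε→0⁺} ε^{2−2κ} ∫_{ℝ^d} (a(p)/|p|^{2γ+d−2}) e^{−μ|p|^{2β} t/ε^κ} e^{ip·x/ε^{α_c}} dp = ∫_{ℝ^d} (a(0)/|p|^{2γ+d−2}) e^{−μ|p|^{2β} t} e^{ip·x} dp. -/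
/-!
After the substitution `p = ε^{α_c} q` the prefactor `ε^{2-2κ}`, the Jacobian `ε^{α_c d}` and the
homogeneity of `|p|^{-(2γ+d-2)}` cancel exactly because `α_c` is critical, while the damping
`|p|^{2β}/ε^κ` and the phase `p·x/ε^{α_c}` become `|q|^{2β}` and `q·x`. The rescaled integrand is
`a(ε^{α_c} q)` times a fixed integrable function (`2γ + d - 2 < d` since `γ < 1`), so dominated
convergence and the continuity of `a` at `0` give the limit.
-/

open MeasureTheory Filter Topology Module

theorem tendsto_rpow_nhdsGT_zero {r : ℝ} (hr : 0 < r) :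
    Tendsto (fun ε : ℝ => ε ^ r) (𝓝[>] 0) (𝓝 0) := by
  simpa only [Real.zero_rpow hr.ne'] using
    (Real.continuousAt_rpow_const 0 r (.inr hr.le)).tendsto.mono_left nhdsWithin_le_nhds

section Scaling

variable {E : Type*} [NormedAddCommGroup E] [NormedSpace ℝ E] [MeasurableSpace E] [BorelSpace E]

theorem tendsto_integral_comp_smul_smul {F : Type*} [NormedAddCommGroup F] [NormedSpace ℝ F]
    {μ : Measure E} {a : E → ℝ} {C : ℝ} (ha_meas : Measurable a) (ha_bdd : ∀ p, |a p| ≤ C)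
    (ha_cont : ContinuousAt a 0) {g : E → F} (hg : Integrable g μ) :
    Tendsto (fun c : ℝ => ∫ q, a (c • q) • g q ∂μ) (𝓝 0) (𝓝 (∫ q, a 0 • g q ∂μ)) := by
  refine tendsto_integral_filter_of_dominated_convergence (fun q => C * ‖g q‖)
    (.of_forall fun c => ?_) (.of_forall fun c => .of_forall fun q => ?_) (hg.norm.const_mul C)
    (.of_forall fun q => ?_)
  · exact ((ha_meas.comp (continuous_const_smul c).measurable).aestronglyMeasurable).smul
      hg.aestronglyMeasurable
  · rw [norm_smul, Real.norm_eq_abs]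
    exact mul_le_mul_of_nonneg_right (ha_bdd _) (norm_nonneg _)
  · have hsmul : Tendsto (fun c : ℝ => c • q) (𝓝 0) (𝓝 0) :=
      (continuous_id.smul continuous_const).tendsto' _ _ (zero_smul ℝ q)
    exact (ha_cont.tendsto.comp hsmul).smul_const _

variable [FiniteDimensional ℝ E] (μ : Measure E) [μ.IsAddHaarMeasure]

theorem rpow_smul_integral_div_norm_rpow_smul_comp_inv_smul {F : Type*} [NormedAddCommGroup F]
    [NormedSpace ℝ F] (a : E → ℝ) (φ : E → F) (s : ℝ) {c : ℝ} (hc : 0 < c) :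
    c ^ (s - finrank ℝ E) • ∫ p, (a p / ‖p‖ ^ s) • φ (c⁻¹ • p) ∂μ
      = ∫ q, a (c • q) • ((‖q‖ ^ s)⁻¹ • φ q) ∂μ := by
  have hscale := Measure.integral_comp_inv_smul_of_nonneg μ
    (fun q => (a (c • q) / ‖c • q‖ ^ s) • φ q) hc.le
  simp only [smul_inv_smul₀ hc.ne'] at hscale
  rw [hscale, smul_smul, ← Real.rpow_natCast, ← Real.rpow_add hc, sub_add_cancel, ← integral_smul]
  congr 1 with q
  rw [smul_smul, smul_smul, norm_smul, Real.norm_of_nonneg hc.le,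
    Real.mul_rpow hc.le (norm_nonneg q)]
  congr 1
  field_simp

theorem integrable_norm_rpow_neg_mul_exp_neg_mul_norm_rpow [Nontrivial E] {s b p : ℝ}
    (hs : s < finrank ℝ E) (hb : 0 < b) (hp : 0 < p) :
    Integrable (fun x : E => ‖x‖ ^ (-s) * Real.exp (-b * ‖x‖ ^ p)) μ := by
  rw [integrable_fun_norm_addHaar μ (f := fun y => y ^ (-s) * Real.exp (-b * y ^ p))]
  refine (integrableOn_rpow_mul_exp_neg_mul_rpow (s := finrank ℝ E - 1 - s) (by linarith) hp hb)
    |>.congr_fun (fun y (hy : 0 < y) => ?_) measurableSet_Ioi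
  have hdim : ((finrank ℝ E - 1 : ℕ) : ℝ) = finrank ℝ E - 1 := by
    rw [Nat.cast_sub finrank_pos, Nat.cast_one]
  rw [smul_eq_mul, ← mul_assoc, ← Real.rpow_natCast, ← Real.rpow_add hy, hdim, sub_eq_add_neg _ s]

end Scaling

section DampedPlaneWave

variable {E : Type*} [NormedAddCommGroup E] [InnerProductSpace ℝ E]

noncomputable def dampedPlaneWave (b p : ℝ) (x q : E) : ℂ :=
  Real.exp (-b * ‖q‖ ^ p) * Complex.exp (Complex.I * inner ℝ q x)

theorem norm_dampedPlaneWave (b p : ℝ) (x q : E) :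
    ‖dampedPlaneWave b p x q‖ = Real.exp (-b * ‖q‖ ^ p) := by
  rw [dampedPlaneWave, norm_mul, Complex.norm_exp_I_mul_ofReal, mul_one, Complex.norm_real,
    Real.norm_of_nonneg (Real.exp_pos _).le]

theorem dampedPlaneWave_inv_smul (b p : ℝ) (x q : E) {c : ℝ} (hc : 0 < c) :
    dampedPlaneWave b p x (c⁻¹ • q)
      = Real.exp (-(b * ‖q‖ ^ p / c ^ p)) * Complex.exp (Complex.I * (inner ℝ q x / c : ℝ)) := by
  rw [dampedPlaneWave, norm_smul, Real.norm_of_nonneg (inv_nonneg.2 hc.le),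
    Real.mul_rpow (inv_nonneg.2 hc.le) (norm_nonneg q), Real.inv_rpow hc.le,
    real_inner_smul_left, inv_mul_eq_div, neg_mul, inv_mul_eq_div, mul_div_assoc']

variable [MeasurableSpace E] [BorelSpace E] [FiniteDimensional ℝ E] [Nontrivial E]

theorem integrable_inv_norm_rpow_smul_dampedPlaneWave (μ : Measure E) [μ.IsAddHaarMeasure]
    {s b p : ℝ} (hs : s < finrank ℝ E) (hb : 0 < b) (hp : 0 < p) (x : E) :
    Integrable (fun q => (‖q‖ ^ s)⁻¹ • dampedPlaneWave b p x q) μ := by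
  refine (integrable_norm_rpow_neg_mul_exp_neg_mul_norm_rpow μ hs hb hp).mono'
    (by unfold dampedPlaneWave; fun_prop) (.of_forall fun q => ?_)
  rw [norm_smul, norm_dampedPlaneWave, Real.norm_of_nonneg (by positivity),
    Real.rpow_neg (norm_nonneg q)]

end DampedPlaneWave

theorem stmt_6_general (d : ℕ) (hd : 1 ≤ d) (μ β γ κ αc : ℝ) (hμ : 0 < μ) (hβ0 : 0 < β)
    (hγ1 : γ < 1) (hβγ : 1 < β + γ)
    (hκ : κ = 2 * β / (2 * β + γ - 1)) (hαc : αc = 1 / (2 * β + γ - 1))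
    (a : EuclideanSpace ℝ (Fin d) → ℝ) (ha0 : ∀ p, 0 ≤ a p)
    (haB : ∃ C, ∀ p, a p ≤ C) (haM : Measurable a)
    (haCont : ContinuousAt a 0)
    (t : ℝ) (ht : 0 < t) (x : EuclideanSpace ℝ (Fin d)) :
    Filter.Tendsto (fun ε : ℝ =>
        ((ε ^ (2 - 2 * κ) : ℝ) : ℂ) *
          ∫ p : EuclideanSpace ℝ (Fin d),
            ((a p / ‖p‖ ^ (2 * γ + d - 2)
                * Real.exp (-(μ * ‖p‖ ^ (2 * β) * t / ε ^ κ)) : ℝ) : ℂ)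
              * Complex.exp (Complex.I * (((inner ℝ p x : ℝ) / ε ^ αc : ℝ) : ℂ)))
      (nhdsWithin 0 (Set.Ioi 0))
      (nhds (∫ p : EuclideanSpace ℝ (Fin d),
          ((a 0 / ‖p‖ ^ (2 * γ + d - 2) * Real.exp (-(μ * ‖p‖ ^ (2 * β) * t)) : ℝ) : ℂ)
            * Complex.exp (Complex.I * ((inner ℝ p x : ℝ) : ℂ)))) := by
  have hD : 0 < 2 * β + γ - 1 := by linarith
  have hαc0 : 0 < αc := by rw [hαc]; positivity
  have hdim : finrank ℝ (EuclideanSpace ℝ (Fin d)) = d := finrank_euclideanSpace_fin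
  have : Nontrivial (EuclideanSpace ℝ (Fin d)) :=
    Module.nontrivial_of_finrank_pos (R := ℝ) (by omega)
  obtain ⟨C, hC⟩ := haB
  have hlim := (tendsto_integral_comp_smul_smul haM
    (fun p => (abs_of_nonneg (ha0 p)).trans_le (hC p)) haCont
    (integrable_inv_norm_rpow_smul_dampedPlaneWave volume (s := 2 * γ + d - 2)
      (by rw [hdim]; linarith) (mul_pos hμ ht) (by positivity : 0 < 2 * β) x)).comp (tendsto_rpow_nhdsGT_zero hαc0)
  convert hlim.congr' (eventually_nhdsWithin_of_forall (s := Set.Ioi 0)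
    fun ε (hε : 0 < ε) => ?_) using 2
  · congr 1 with p
    simp only [dampedPlaneWave, Complex.real_smul]
    push_cast
    ring_nf
  have hcε : 0 < ε ^ αc := Real.rpow_pos_of_pos hε αc
  have hprefactor : ε ^ (2 - 2 * κ) = (ε ^ αc) ^ (2 * γ + d - 2 - d) := by
    rw [← Real.rpow_mul hε.le]; congr 1; rw [hκ, hαc]; field_simp; ring
  have hdamping : ε ^ κ = (ε ^ αc) ^ (2 * β) := by
    rw [← Real.rpow_mul hε.le]; congr 1; rw [hκ, hαc]; field_simp
  dsimp only [Function.comp_apply]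
  rw [← rpow_smul_integral_div_norm_rpow_smul_comp_inv_smul _ _ _ _ hcε, Complex.real_smul, hdim,
    ← hprefactor]
  congr 2 with p
  rw [dampedPlaneWave_inv_smul _ _ _ _ hcε, ← hdamping, Complex.real_smul]
  push_cast
  ring_nf

/-- At the critical wavelength exponent `α_c`, the rescaled covariance converges:
`lim_{ε→0⁺} ε^{2-2κ} ∫ (a(p)/|p|^{2γ+d-2}) e^{-μ|p|^{2β}t/ε^κ} e^{ip·x/ε^{α_c}} dp
  = ∫ (a(0)/|p|^{2γ+d-2}) e^{-μ|p|^{2β}t} e^{ip·x} dp`. -/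
theorem stmt_6 (d : ℕ) (hd : 1 ≤ d) (μ β γ κ αc : ℝ) (hμ : 0 < μ) (hβ0 : 0 < β)
    (hβ1 : β < 1) (hγ0 : 0 < γ) (hγ1 : γ < 1) (hβγ : 1 < β + γ)
    (hκ : κ = 2 * β / (2 * β + γ - 1)) (hαc : αc = 1 / (2 * β + γ - 1))
    (a : EuclideanSpace ℝ (Fin d) → ℝ) (ha0 : ∀ p, 0 ≤ a p)
    (haB : ∃ C, ∀ p, a p ≤ C) (haM : Measurable a) (haCS : HasCompactSupport a)
    (haCont : ContinuousAt a 0)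
    (t : ℝ) (ht : 0 < t) (x : EuclideanSpace ℝ (Fin d)) :
    Filter.Tendsto (fun ε : ℝ =>
        ((ε ^ (2 - 2 * κ) : ℝ) : ℂ) *
          ∫ p : EuclideanSpace ℝ (Fin d),
            ((a p / ‖p‖ ^ (2 * γ + d - 2)
                * Real.exp (-(μ * ‖p‖ ^ (2 * β) * t / ε ^ κ)) : ℝ) : ℂ)
              * Complex.exp (Complex.I * (((inner ℝ p x : ℝ) / ε ^ αc : ℝ) : ℂ)))
      (nhdsWithin 0 (Set.Ioi 0))
      (nhds (∫ p : EuclideanSpace ℝ (Fin d),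
          ((a 0 / ‖p‖ ^ (2 * γ + d - 2) * Real.exp (-(μ * ‖p‖ ^ (2 * β) * t)) : ℝ) : ℂ)
            * Complex.exp (Complex.I * ((inner ℝ p x : ℝ) : ℂ)))) :=
  stmt_6_general d hd μ β γ κ αc hμ hβ0 hγ1 hβγ hκ hαc a ha0 haB haM haCont t ht x
end

section
/- Let d ≥ 1 be an integer, μ > 0, 0 < β < 1, 0 < γ < 1 with β + γ > 1, κ = 2β/(2β+γ−1) and α_c = 1/(2β+γ−1), let 0 < α < α_c, and let a : ℝ^d → [0,∞) be bounded, measurable, compactly supported and continuous at 0. Then for every t > 0 and x ∈ ℝ^d: lim_{ε→0⁺} ε^{2−2κ} ∫_{ℝ^d} (a(p)/|p|^{2γ+d−2}) e^{−μ|p|^{2β} t/ε^κ} e^{ip·x/ε^{α}} dp = a(0) K₁ t^{−(1−γ)/β}, where K₁ = Ω_d ∫₀^∞ e^{−μ ρ^{2β}} ρ^{1−2γ} dρ and Ω_d is the surface area of the unit sphere in ℝ^d. In particular the limit does not depend on x. -/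
open MeasureTheory

/-- The surface area `Ω_d` of the unit sphere in `ℝ^d`, expressed as `d` times the
volume of the unit ball. -/
noncomputable def unitSphereArea (d : ℕ) : ℝ :=
  d * (volume (Metric.ball (0 : EuclideanSpace ℝ (Fin d)) 1)).toReal

/-!
Substitute `p = s • q` with `s ^ (2β) = ε ^ κ / t`. The damping factor becomes
`exp (-μ ‖q‖ ^ (2β))`, and the Jacobian together with the singular weight produces
`s ^ (2 - 2γ)`, which cancels `ε ^ (2 - 2κ)` up to `t ^ (-(1 - γ) / β)`. The phase becomes
`(s / ε ^ α) ⟪q, x⟫` with `s / ε ^ α ≍ ε ^ (α_c - α) → 0`, and `a (s • q) → a 0`. Dominated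
convergence against `C ‖q‖ ^ (2 - 2γ - d) exp (-μ ‖q‖ ^ (2β))`, integrable because `γ < 1`,
leaves `a 0 ∫ ‖q‖ ^ (2 - 2γ - d) exp (-μ ‖q‖ ^ (2β)) dq`, which is `a 0 K₁` in polar coordinates.
-/

open Real Set Metric Filter Topology Module

section Radial

variable {E : Type*} [NormedAddCommGroup E] [NormedSpace ℝ E] [FiniteDimensional ℝ E]
  [MeasurableSpace E] [BorelSpace E] [Nontrivial E] (ν : Measure E) [ν.IsAddHaarMeasure]

lemma pow_pred_div_rpow {y : ℝ} (hy : 0 < y) {n : ℕ} (hn : 1 ≤ n) (r : ℝ) :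
    y ^ (n - 1) / y ^ r = y ^ ((n : ℝ) - 1 - r) := by
  rw [← rpow_natCast, Nat.cast_sub hn, Nat.cast_one, ← rpow_sub hy]

lemma integrable_div_norm_rpow_mul_exp_neg (c : ℝ) {r b k : ℝ}
    (hr : r < finrank ℝ E) (hb : 0 < b) (hk : 0 < k) :
    Integrable (fun q : E => c / ‖q‖ ^ r * exp (-(b * ‖q‖ ^ k))) ν := by
  rw [integrable_fun_norm_addHaar ν (f := fun y => c / y ^ r * exp (-(b * y ^ k)))]
  have hs : -1 < (finrank ℝ E : ℝ) - 1 - r := by linarith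
  refine IntegrableOn.congr_fun ((integrableOn_rpow_mul_exp_neg_mul_rpow hs hk hb).const_mul c)
    (fun y (hy : 0 < y) => ?_) measurableSet_Ioi
  rw [← pow_pred_div_rpow hy finrank_pos r, smul_eq_mul, neg_mul]
  ring

lemma integral_div_norm_rpow_mul_exp_neg (c r b k : ℝ) :
    ∫ q : E, c / ‖q‖ ^ r * exp (-(b * ‖q‖ ^ k)) ∂ν
      = c * (finrank ℝ E * ν.real (ball 0 1)) *
        ∫ y in Ioi (0 : ℝ), exp (-(b * y ^ k)) * y ^ ((finrank ℝ E : ℝ) - 1 - r) := by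
  have hradial :
      ∫ y in Ioi (0 : ℝ), y ^ (finrank ℝ E - 1) • (c / y ^ r * exp (-(b * y ^ k)))
        = ∫ y in Ioi (0 : ℝ), c * (exp (-(b * y ^ k)) * y ^ ((finrank ℝ E : ℝ) - 1 - r)) := by
    refine setIntegral_congr_fun measurableSet_Ioi (fun y (hy : 0 < y) => ?_)
    rw [← pow_pred_div_rpow hy finrank_pos r, smul_eq_mul]
    ring
  rw [integral_fun_norm_addHaar ν (fun y => c / y ^ r * exp (-(b * y ^ k))), hradial,
    integral_const_mul, nsmul_eq_mul, smul_eq_mul]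
  ring

end Radial

section Rescaling

variable {E : Type*} [NormedAddCommGroup E] [InnerProductSpace ℝ E]

/-- The covariance integrand after the substitution `p = s • q`; `ω` stands for `s / ε ^ α`. -/
noncomputable def rescaledIntegrand (a : E → ℝ) (r b k : ℝ) (x : E) (s ω : ℝ) (q : E) : ℂ :=
  ((a (s • q) / ‖q‖ ^ r * exp (-(b * ‖q‖ ^ k)) : ℝ) : ℂ) *
    Complex.exp (Complex.I * ((ω * inner ℝ q x : ℝ) : ℂ))

lemma rescaledIntegrand_zero_zero (a : E → ℝ) (r b k : ℝ) (x q : E) :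
    rescaledIntegrand a r b k x 0 0 q = ((a 0 / ‖q‖ ^ r * exp (-(b * ‖q‖ ^ k)) : ℝ) : ℂ) := by
  simp [rescaledIntegrand]

lemma norm_rescaledIntegrand_le {a : E → ℝ} {C : ℝ} (ha0 : ∀ p, 0 ≤ a p) (haC : ∀ p, a p ≤ C)
    (r b k : ℝ) (x : E) (s ω : ℝ) (q : E) :
    ‖rescaledIntegrand a r b k x s ω q‖ ≤ C / ‖q‖ ^ r * exp (-(b * ‖q‖ ^ k)) := by
  rw [rescaledIntegrand, norm_mul, mul_comm Complex.I, Complex.norm_exp_ofReal_mul_I, mul_one,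
    Complex.norm_real, Real.norm_of_nonneg (by have := ha0 (s • q); positivity)]
  gcongr
  exact haC _

lemma aestronglyMeasurable_rescaledIntegrand [MeasurableSpace E] [BorelSpace E] {a : E → ℝ}
    (haM : Measurable a) (r b k : ℝ) (x : E) (s ω : ℝ) (ν : Measure E) :
    AEStronglyMeasurable (rescaledIntegrand a r b k x s ω) ν := by
  unfold rescaledIntegrand
  fun_prop

lemma tendsto_rescaledIntegrand {a : E → ℝ} (haCont : ContinuousAt a 0) (r b k : ℝ) (x : E)
    {ι : Type*} {l : Filter ι} {s ω : ι → ℝ} (hs : Tendsto s l (𝓝 0)) (hω : Tendsto ω l (𝓝 0))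
    (q : E) :
    Tendsto (fun i => rescaledIntegrand a r b k x (s i) (ω i) q) l
      (𝓝 (rescaledIntegrand a r b k x 0 0 q)) := by
  have ha : Tendsto (fun i => a (s i • q)) l (𝓝 (a ((0 : ℝ) • q))) := by
    rw [zero_smul]
    exact haCont.tendsto.comp (by simpa using hs.smul_const q)
  unfold rescaledIntegrand
  exact (((ha.div_const _).mul_const _).ofReal).mul
    (((hω.mul_const _).ofReal.const_mul _).cexp)

end Rescaling

section Limit

variable {E : Type*} [NormedAddCommGroup E] [InnerProductSpace ℝ E] [FiniteDimensional ℝ E]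
  [MeasurableSpace E] [BorelSpace E] (ν : Measure E) [ν.IsAddHaarMeasure]

lemma tendsto_integral_rescaledIntegrand [Nontrivial E] {a : E → ℝ} (ha0 : ∀ p, 0 ≤ a p)
    (haB : ∃ C, ∀ p, a p ≤ C) (haM : Measurable a) (haCont : ContinuousAt a 0) {r b k : ℝ}
    (hr : r < finrank ℝ E) (hb : 0 < b) (hk : 0 < k) (x : E) {ι : Type*} {l : Filter ι}
    [l.IsCountablyGenerated] {s ω : ι → ℝ} (hs : Tendsto s l (𝓝 0)) (hω : Tendsto ω l (𝓝 0)) :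
    Tendsto (fun i => ∫ q, rescaledIntegrand a r b k x (s i) (ω i) q ∂ν) l
      (𝓝 (∫ q, rescaledIntegrand a r b k x 0 0 q ∂ν)) := by
  obtain ⟨C, hC⟩ := haB
  exact tendsto_integral_filter_of_dominated_convergence _
    (.of_forall fun i => aestronglyMeasurable_rescaledIntegrand haM r b k x _ _ ν)
    (.of_forall fun i => .of_forall (norm_rescaledIntegrand_le ha0 hC r b k x _ _))
    (integrable_div_norm_rpow_mul_exp_neg ν C hr hb hk)
    (.of_forall (tendsto_rescaledIntegrand haCont r b k x hs hω))

lemma integral_eq_rpow_mul_integral_rescaledIntegrand (a : E → ℝ) (r b k : ℝ) (x : E)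
    {s t e w : ℝ} (hs : 0 < s) (hse : s ^ k = e / t) :
    ∫ p, ((a p / ‖p‖ ^ r * exp (-(b * ‖p‖ ^ k * t / e)) : ℝ) : ℂ) *
        Complex.exp (Complex.I * ((inner ℝ p x / w : ℝ) : ℂ)) ∂ν
      = ((s ^ ((finrank ℝ E : ℝ) - r) : ℝ) : ℂ) *
        ∫ q, rescaledIntegrand a r b k x s (s / w) q ∂ν := by
  obtain ⟨he, ht⟩ := div_ne_zero_iff.mp (hse ▸ (rpow_pos_of_pos hs k).ne')
  set F : E → ℂ := fun p => ((a p / ‖p‖ ^ r * exp (-(b * ‖p‖ ^ k * t / e)) : ℝ) : ℂ) *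
    Complex.exp (Complex.I * ((inner ℝ p x / w : ℝ) : ℂ))
  have hcomp (q : E) :
      F (s • q) = ((s ^ (-r) : ℝ) : ℂ) * rescaledIntegrand a r b k x s (s / w) q := by
    have hnorm : ‖s • q‖ = s * ‖q‖ := by rw [norm_smul, norm_of_nonneg hs.le]
    have hexp : b * ‖s • q‖ ^ k * t / e = b * ‖q‖ ^ k := by
      rw [hnorm, mul_rpow hs.le (norm_nonneg q), hse]
      field_simp
    simp only [F, rescaledIntegrand]
    rw [hexp, hnorm, mul_rpow hs.le (norm_nonneg q), real_inner_smul_left, mul_div_right_comm,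
      rpow_neg hs.le]
    push_cast
    ring
  calc ∫ p, F p ∂ν = s ^ finrank ℝ E • ∫ q, F (s • q) ∂ν := by
        rw [Measure.integral_comp_smul_of_nonneg ν F s (hR := hs.le),
          smul_inv_smul₀ (pow_ne_zero _ hs.ne')]
    _ = _ := by
      simp_rw [hcomp]
      rw [integral_const_mul, Complex.real_smul, ← mul_assoc, ← Complex.ofReal_mul,
        ← rpow_natCast, ← rpow_add hs, sub_eq_add_neg]

lemma integral_rescaledIntegrand_zero_zero [Nontrivial E] (a : E → ℝ) (r b k : ℝ) (x : E) :
    ∫ q, rescaledIntegrand a r b k x 0 0 q ∂ν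
      = ((a 0 * (finrank ℝ E * ν.real (ball 0 1)) *
          ∫ y in Ioi (0 : ℝ), exp (-(b * y ^ k)) * y ^ ((finrank ℝ E : ℝ) - 1 - r) : ℝ) : ℂ) := by
  simp_rw [rescaledIntegrand_zero_zero]
  rw [integral_complex_ofReal, integral_div_norm_rpow_mul_exp_neg]

end Limit

section HeatScale

/-- The momentum scale `s` with `s ^ (2β) = ε ^ κ / t`, at which the damping factor
`exp (-μ ‖p‖ ^ (2β) t / ε ^ κ)` is of order one. -/
noncomputable def heatScale (κ β t ε : ℝ) : ℝ := (ε ^ κ / t) ^ (2 * β)⁻¹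

variable {κ β t : ℝ}

lemma heatScale_pos (ht : 0 < t) {ε : ℝ} (hε : 0 < ε) : 0 < heatScale κ β t ε :=
  rpow_pos_of_pos (div_pos (rpow_pos_of_pos hε κ) ht) _

lemma heatScale_rpow_two_mul (hβ : β ≠ 0) (ht : 0 < t) {ε : ℝ} (hε : 0 < ε) :
    heatScale κ β t ε ^ (2 * β) = ε ^ κ / t :=
  rpow_inv_rpow (div_pos (rpow_pos_of_pos hε κ) ht).le (by positivity)

lemma heatScale_rpow (ht : 0 ≤ t) {ε : ℝ} (hε : 0 ≤ ε) (c : ℝ) :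
    heatScale κ β t ε ^ c = ε ^ (κ * c / (2 * β)) / t ^ (c / (2 * β)) := by
  rw [heatScale, ← rpow_mul (div_nonneg (rpow_nonneg hε κ) ht), div_rpow (rpow_nonneg hε κ) ht,
    ← rpow_mul hε]
  ring_nf

lemma tendsto_rpow_div_const_nhdsGT_zero {p : ℝ} (hp : 0 < p) (c : ℝ) :
    Tendsto (fun ε : ℝ => ε ^ p / c) (𝓝[>] 0) (𝓝 0) := by
  have h := ((continuous_rpow_const hp.le).tendsto' 0 0 (zero_rpow hp.ne')).div_const c
  rw [zero_div] at h
  exact h.mono_left nhdsWithin_le_nhds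

lemma tendsto_heatScale_div_rpow (ht : 0 ≤ t) {α : ℝ} (hα : α < κ / (2 * β)) :
    Tendsto (fun ε => heatScale κ β t ε / ε ^ α) (𝓝[>] 0) (𝓝 0) := by
  refine (tendsto_rpow_div_const_nhdsGT_zero (sub_pos.mpr hα) (t ^ (1 / (2 * β)))).congr' ?_
  filter_upwards [self_mem_nhdsWithin] with ε (hε : 0 < ε)
  rw [← rpow_one (heatScale κ β t ε), heatScale_rpow ht hε.le, mul_one, rpow_sub hε,
    div_right_comm]

lemma tendsto_heatScale (ht : 0 ≤ t) (hκβ : 0 < κ / (2 * β)) :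
    Tendsto (heatScale κ β t) (𝓝[>] 0) (𝓝 0) := by
  simpa using tendsto_heatScale_div_rpow ht hκβ

lemma rpow_mul_heatScale_rpow {γ : ℝ} (hβ : β ≠ 0) (hD : 2 * β + γ - 1 ≠ 0)
    (hκ : κ = 2 * β / (2 * β + γ - 1)) (ht : 0 ≤ t) {ε : ℝ} (hε : 0 < ε) :
    ε ^ (2 - 2 * κ) * heatScale κ β t ε ^ (2 - 2 * γ) = t ^ (-(1 - γ) / β) := by
  rw [heatScale_rpow ht hε.le, mul_div_assoc', ← rpow_add hε,
    show 2 - 2 * κ + κ * (2 - 2 * γ) / (2 * β) = 0 by rw [hκ]; field_simp; ring,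
    show (2 - 2 * γ) / (2 * β) = (1 - γ) / β by field_simp,
    rpow_zero, neg_div, rpow_neg ht, one_div]

end HeatScale

theorem stmt_7_general (d : ℕ) (hd : 1 ≤ d) (μ β γ κ αc α : ℝ) (hμ : 0 < μ) (hβ0 : 0 < β)
    (hγ1 : γ < 1) (hβγ : 1 < β + γ)
    (hκ : κ = 2 * β / (2 * β + γ - 1)) (hαc : αc = 1 / (2 * β + γ - 1))
    (hααc : α < αc)
    (a : EuclideanSpace ℝ (Fin d) → ℝ) (ha0 : ∀ p, 0 ≤ a p)
    (haB : ∃ C, ∀ p, a p ≤ C) (haM : Measurable a)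
    (haCont : ContinuousAt a 0)
    (K₁ : ℝ) (hK₁ : K₁ = unitSphereArea d *
      ∫ ρ in Set.Ioi (0 : ℝ), Real.exp (-(μ * ρ ^ (2 * β))) * ρ ^ (1 - 2 * γ))
    (t : ℝ) (ht : 0 < t) (x : EuclideanSpace ℝ (Fin d)) :
    Filter.Tendsto (fun ε : ℝ =>
        ((ε ^ (2 - 2 * κ) : ℝ) : ℂ) *
          ∫ p : EuclideanSpace ℝ (Fin d),
            ((a p / ‖p‖ ^ (2 * γ + d - 2)
                * Real.exp (-(μ * ‖p‖ ^ (2 * β) * t / ε ^ κ)) : ℝ) : ℂ)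
              * Complex.exp (Complex.I * (((inner ℝ p x : ℝ) / ε ^ α : ℝ) : ℂ)))
      (nhdsWithin 0 (Set.Ioi 0))
      (nhds ((a 0 * K₁ * t ^ (-(1 - γ) / β) : ℝ) : ℂ)) := by
  have : Nonempty (Fin d) := ⟨⟨0, hd⟩⟩
  have hdim : (finrank ℝ (EuclideanSpace ℝ (Fin d)) : ℝ) = d := by simp
  have hD : 0 < 2 * β + γ - 1 := by linarith
  have hκαc : κ / (2 * β) = αc := by rw [hκ, hαc]; field_simp
  set s := heatScale κ β t
  have hrescale : ∀ ε ∈ Ioi (0 : ℝ),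
      ((t ^ (-(1 - γ) / β) : ℝ) : ℂ) *
          ∫ q, rescaledIntegrand a (2 * γ + d - 2) μ (2 * β) x (s ε) (s ε / ε ^ α) q
        = ((ε ^ (2 - 2 * κ) : ℝ) : ℂ) * ∫ p : EuclideanSpace ℝ (Fin d),
            ((a p / ‖p‖ ^ (2 * γ + d - 2) * exp (-(μ * ‖p‖ ^ (2 * β) * t / ε ^ κ)) : ℝ) : ℂ)
              * Complex.exp (Complex.I * (((inner ℝ p x : ℝ) / ε ^ α : ℝ) : ℂ)) := by
    intro ε (hε : 0 < ε)
    rw [integral_eq_rpow_mul_integral_rescaledIntegrand volume a _ μ (2 * β) x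
      (heatScale_pos ht hε) (heatScale_rpow_two_mul hβ0.ne' ht hε), hdim,
      show (d : ℝ) - (2 * γ + d - 2) = 2 - 2 * γ by ring, ← mul_assoc, ← Complex.ofReal_mul,
      rpow_mul_heatScale_rpow hβ0.ne' hD.ne' hκ ht.le hε]
  have hlim := (tendsto_integral_rescaledIntegrand volume ha0 haB haM haCont
    (r := 2 * γ + d - 2) (k := 2 * β) (by rw [hdim]; linarith) hμ (by positivity) x
    (tendsto_heatScale ht.le (by rw [hκαc, hαc]; positivity))
    (tendsto_heatScale_div_rpow ht.le (hκαc ▸ hααc))).const_mul ((t ^ (-(1 - γ) / β) : ℝ) : ℂ)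
  rw [integral_rescaledIntegrand_zero_zero, hdim,
    show (d : ℝ) - 1 - (2 * γ + d - 2) = 1 - 2 * γ by ring] at hlim
  convert hlim.congr' (eventually_nhdsWithin_of_forall hrescale) using 2
  rw [hK₁, unitSphereArea, measureReal_def]
  push_cast
  ring

/-- Below the critical wavelength exponent (`0 < α < α_c`), the rescaled covariance
converges to the spatially frozen limit `a(0) K₁ t^{-(1-γ)/β}`, independent of `x`. -/
theorem stmt_7 (d : ℕ) (hd : 1 ≤ d) (μ β γ κ αc α : ℝ) (hμ : 0 < μ) (hβ0 : 0 < β)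
    (hβ1 : β < 1) (hγ0 : 0 < γ) (hγ1 : γ < 1) (hβγ : 1 < β + γ)
    (hκ : κ = 2 * β / (2 * β + γ - 1)) (hαc : αc = 1 / (2 * β + γ - 1))
    (hα0 : 0 < α) (hααc : α < αc)
    (a : EuclideanSpace ℝ (Fin d) → ℝ) (ha0 : ∀ p, 0 ≤ a p)
    (haB : ∃ C, ∀ p, a p ≤ C) (haM : Measurable a) (haCS : HasCompactSupport a)
    (haCont : ContinuousAt a 0)
    (K₁ : ℝ) (hK₁ : K₁ = unitSphereArea d *
      ∫ ρ in Set.Ioi (0 : ℝ), Real.exp (-(μ * ρ ^ (2 * β))) * ρ ^ (1 - 2 * γ))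
    (t : ℝ) (ht : 0 < t) (x : EuclideanSpace ℝ (Fin d)) :
    Filter.Tendsto (fun ε : ℝ =>
        ((ε ^ (2 - 2 * κ) : ℝ) : ℂ) *
          ∫ p : EuclideanSpace ℝ (Fin d),
            ((a p / ‖p‖ ^ (2 * γ + d - 2)
                * Real.exp (-(μ * ‖p‖ ^ (2 * β) * t / ε ^ κ)) : ℝ) : ℂ)
              * Complex.exp (Complex.I * (((inner ℝ p x : ℝ) / ε ^ α : ℝ) : ℂ)))
      (nhdsWithin 0 (Set.Ioi 0))
      (nhds ((a 0 * K₁ * t ^ (-(1 - γ) / β) : ℝ) : ℂ)) :=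
  stmt_7_general d hd μ β γ κ αc α hμ hβ0 hγ1 hβγ hκ hαc hααc a ha0 haB haM haCont K₁ hK₁ t ht x
end

section
/- Let d ≥ 1 be an integer, μ > 0, 0 < β < 1, 0 < γ < 1 with β + γ > 1, κ = 2β/(2β+γ−1), and let a : ℝ^d → [0,∞) be bounded and measurable. Then for every ε ∈ (0,1] and t > 0, the change of variables w ↦ ε^{κ/(2β)} |s−u|^{−1/(2β)} w gives the identity ε^{2−2κ} ∫_{[0,t]²} ∫_{ℝ^d} e^{−μ|w|^{2β} |s−u|/ε^κ} (a(w)/|w|^{2γ+d−2}) dw ds du = ∫_{[0,t]²} ∫_{ℝ^d} (e^{−μ|w|^{2β}}/|w|^{2γ+d−2}) a(ε^{κ/(2β)} w / |s−u|^{1/(2β)}) |s−u|^{−(1−γ)/β} dw ds du, and both sides are bounded above by (sup a) · K₁ · (κ²/(2−κ)) · t^{2/κ}, where K₁ = Ω_d ∫₀^∞ e^{−μ ρ^{2β}} ρ^{1−2γ} dρ and Ω_d is the surface area of the unit sphere in ℝ^d. In particular the bound is uniform in ε ∈ (0,1]. -/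
/-!
Substituting `w = c • v` with `c = ε^{κ/2β} |s-u|^{-1/2β}` turns the exponent into `μ|v|^{2β}`
and produces the Jacobian-and-weight factor `c^{d-(2γ+d-2)} = c^{2-2γ}`; the value of `κ` is
exactly the one for which the powers of `ε` cancel, leaving `|s-u|^{-(1-γ)/β}`. Bounding `a` by
its supremum, polar coordinates bound the `w`-integral by `(sup a) K₁`, and since
`α = (1-γ)/β < 1` the kernel `|s-u|^{-α}` is integrable on `[0,t]²` with
`∫∫ |s-u|^{-α} = 2 t^{2-α} / ((1-α)(2-α)) = (κ²/(2-κ)) t^{2/κ}`.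
-/

open MeasureTheory

section Radial

open Real Set Module

lemma rpow_sub_one_mul_exp_div_rpow {n : ℕ} (hn : 1 ≤ n) (μ β γ : ℝ) {ρ : ℝ} (hρ : 0 < ρ) :
    ρ ^ (n - 1) * (exp (-(μ * ρ ^ (2 * β))) / ρ ^ (2 * γ + n - 2))
      = exp (-(μ * ρ ^ (2 * β))) * ρ ^ (1 - 2 * γ) := by
  rw [← rpow_natCast, Nat.cast_sub hn, Nat.cast_one, mul_div_left_comm, ← rpow_sub hρ]
  ring_nf

variable {E : Type*} [NormedAddCommGroup E] [NormedSpace ℝ E]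

noncomputable def radialWeight (μ β γ : ℝ) (w : E) : ℝ :=
  exp (-(μ * ‖w‖ ^ (2 * β))) / ‖w‖ ^ (2 * γ + finrank ℝ E - 2)

lemma radialWeight_nonneg (μ β γ : ℝ) (w : E) : 0 ≤ radialWeight μ β γ w :=
  div_nonneg (exp_nonneg _) (rpow_nonneg (norm_nonneg w) _)

lemma integral_radialWeight_mul_le [MeasurableSpace E] {ν : Measure E} {μ β γ M : ℝ}
    (hint : Integrable (radialWeight (E := E) μ β γ) ν)
    {g : E → ℝ} (hg0 : ∀ w, 0 ≤ g w) (hgM : ∀ w, g w ≤ M) :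
    ∫ w, radialWeight μ β γ w * g w ∂ν ≤ M * ∫ w, radialWeight μ β γ w ∂ν := by
  have hw0 := radialWeight_nonneg (E := E) μ β γ
  calc ∫ w, radialWeight μ β γ w * g w ∂ν ≤ ∫ w, radialWeight μ β γ w * M ∂ν :=
        integral_mono_of_nonneg (.of_forall fun w => mul_nonneg (hw0 w) (hg0 w))
          (hint.mul_const M) (.of_forall fun w => mul_le_mul_of_nonneg_left (hgM w) (hw0 w))
    _ = M * ∫ w, radialWeight μ β γ w ∂ν := by rw [integral_mul_const, mul_comm]

variable [Nontrivial E] [FiniteDimensional ℝ E] [MeasurableSpace E] [BorelSpace E]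
  (ν : Measure E) [ν.IsAddHaarMeasure]

lemma integrable_radialWeight {μ β γ : ℝ} (hμ : 0 < μ) (hβ : 0 < β) (hγ : γ < 1) :
    Integrable (radialWeight (E := E) μ β γ) ν := by
  refine (integrable_fun_norm_addHaar ν
    (f := fun ρ => exp (-(μ * ρ ^ (2 * β))) / ρ ^ (2 * γ + finrank ℝ E - 2))).2 ?_
  refine (integrableOn_rpow_mul_exp_neg_mul_rpow (s := 1 - 2 * γ) (p := 2 * β) (by linarith)
    (by linarith) hμ).congr_fun (fun ρ hρ => ?_) measurableSet_Ioi
  dsimp only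
  rw [smul_eq_mul, rpow_sub_one_mul_exp_div_rpow finrank_pos μ β γ hρ, neg_mul, mul_comm]

lemma integral_radialWeight (μ β γ : ℝ) :
    ∫ w, radialWeight μ β γ w ∂ν
      = finrank ℝ E * ν.real (Metric.ball 0 1)
        * ∫ ρ in Ioi (0 : ℝ), exp (-(μ * ρ ^ (2 * β))) * ρ ^ (1 - 2 * γ) := by
  unfold radialWeight
  rw [integral_fun_norm_addHaar ν
      (fun ρ => exp (-(μ * ρ ^ (2 * β))) / ρ ^ (2 * γ + finrank ℝ E - 2))]
  simp only [smul_eq_mul, nsmul_eq_mul]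
  rw [setIntegral_congr_fun measurableSet_Ioi
      (fun ρ hρ => rpow_sub_one_mul_exp_div_rpow finrank_pos μ β γ hρ), mul_assoc]

lemma radialWeight_euclideanSpace {d : ℕ} (μ β γ : ℝ) (w : EuclideanSpace ℝ (Fin d)) :
    radialWeight μ β γ w = Real.exp (-(μ * ‖w‖ ^ (2 * β))) / ‖w‖ ^ (2 * γ + d - 2) := by
  rw [radialWeight, finrank_euclideanSpace_fin]

end Radial

section Scaling

open Real Module

lemma rpow_two_sub_mul_div_rpow_eq {β γ κ ε r : ℝ} (hβ : β ≠ 0) (hden : 2 * β + γ - 1 ≠ 0)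
    (hκ : κ = 2 * β / (2 * β + γ - 1)) (hε : 0 < ε) (hr : 0 < r) :
    ε ^ (2 - 2 * κ) * (ε ^ (κ / (2 * β)) / r ^ (1 / (2 * β))) ^ (2 - 2 * γ)
      = r ^ (-(1 - γ) / β) := by
  have hexp : 2 - 2 * κ + κ / (2 * β) * (2 - 2 * γ) = 0 := by
    rw [hκ]; field_simp; ring
  rw [div_rpow (rpow_nonneg hε.le _) (rpow_nonneg hr.le _), ← rpow_mul hε.le, ← rpow_mul hr.le,
    mul_div, ← rpow_add hε, hexp, rpow_zero, one_div, ← rpow_neg hr.le]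
  congr 1
  field_simp

variable {E : Type*} [NormedAddCommGroup E] [NormedSpace ℝ E] [FiniteDimensional ℝ E]
  [MeasurableSpace E] [BorelSpace E] (ν : Measure E) [ν.IsAddHaarMeasure]

lemma integral_exp_div_rpow_eq_integral_radialWeight (a : E → ℝ) {μ β γ κ ε r : ℝ}
    (hβ : β ≠ 0) (hden : 2 * β + γ - 1 ≠ 0) (hκ : κ = 2 * β / (2 * β + γ - 1))
    (hε : 0 < ε) (hr : 0 < r) :
    ε ^ (2 - 2 * κ) * ∫ w, exp (-(μ * ‖w‖ ^ (2 * β) * r / ε ^ κ)) * a w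
        / ‖w‖ ^ (2 * γ + finrank ℝ E - 2) ∂ν
      = ∫ w, radialWeight μ β γ w * a ((ε ^ (κ / (2 * β)) / r ^ (1 / (2 * β))) • w)
        * r ^ (-(1 - γ) / β) ∂ν := by
  set c := ε ^ (κ / (2 * β)) / r ^ (1 / (2 * β))
  set e : ℝ := 2 * γ + finrank ℝ E - 2 with he
  have hc : 0 < c := div_pos (rpow_pos_of_pos hε _) (rpow_pos_of_pos hr _)
  have hc2β : c ^ (2 * β) * r = ε ^ κ := by
    have h2β : 2 * β ≠ 0 := mul_ne_zero two_ne_zero hβ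
    rw [div_rpow (rpow_nonneg hε.le _) (rpow_nonneg hr.le _), ← rpow_mul hε.le, ← rpow_mul hr.le,
      div_mul_cancel₀ _ h2β, one_div_mul_cancel h2β, rpow_one, div_mul_cancel₀ _ hr.ne']
  have hsmul : ∀ w : E, exp (-(μ * ‖c • w‖ ^ (2 * β) * r / ε ^ κ)) * a (c • w) / ‖c • w‖ ^ e
      = (c ^ e)⁻¹ * (radialWeight μ β γ w * a (c • w)) := by
    intro w
    rw [norm_smul, norm_of_nonneg hc.le, mul_rpow hc.le (norm_nonneg w),
      mul_rpow hc.le (norm_nonneg w), radialWeight,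
      show μ * (c ^ (2 * β) * ‖w‖ ^ (2 * β)) * r / ε ^ κ = μ * ‖w‖ ^ (2 * β) by
        rw [← hc2β]; field_simp [(rpow_pos_of_pos hc (2 * β)).ne', hr.ne']]
    ring
  have hdim : c ^ finrank ℝ E * (c ^ e)⁻¹ = c ^ (2 - 2 * γ) := by
    rw [← rpow_natCast, ← rpow_neg hc.le, ← rpow_add hc, he]
    ring_nf
  have hchange := Measure.integral_comp_smul_of_nonneg ν
    (fun w => exp (-(μ * ‖w‖ ^ (2 * β) * r / ε ^ κ)) * a w / ‖w‖ ^ e) c (hR := hc.le)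
  simp only [hsmul, integral_const_mul, smul_eq_mul] at hchange
  rw [eq_comm, inv_mul_eq_iff_eq_mul₀ (pow_pos hc _).ne'] at hchange
  rw [integral_mul_const, hchange, ← rpow_two_sub_mul_div_rpow_eq hβ hden hκ hε hr, ← hdim]
  ring

end Scaling

section IntervalIntegrals

open Real Set intervalIntegral

lemma integral_integral_congr_of_ne {F G : ℝ → ℝ → ℝ} {a b c d : ℝ}
    (h : ∀ s u, s ≠ u → F s u = G s u) :
    ∫ s in a..b, ∫ u in c..d, F s u = ∫ s in a..b, ∫ u in c..d, G s u :=
  integral_congr fun s _ => integral_congr_ae <| (Measure.ae_ne volume s).mono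
    fun u hu _ => h s u (Ne.symm hu)

lemma intervalIntegral.integral_mono_on_of_nonneg {f g : ℝ → ℝ} {a b : ℝ} (hab : a ≤ b)
    (hf : ∀ x ∈ Ioc a b, 0 ≤ f x) (hg : IntervalIntegrable g volume a b)
    (hfg : ∀ x ∈ Ioc a b, f x ≤ g x) :
    ∫ x in a..b, f x ≤ ∫ x in a..b, g x := by
  rw [integral_of_le hab, integral_of_le hab]
  exact integral_mono_of_nonneg (ae_restrict_of_forall_mem measurableSet_Ioc hf) hg.1
    (ae_restrict_of_forall_mem measurableSet_Ioc hfg)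

lemma intervalIntegrable_abs_rpow {p : ℝ} (hp : -1 < p) (a b : ℝ) :
    IntervalIntegrable (fun x : ℝ => |x| ^ p) volume a b := by
  have hloc : LocallyIntegrable (fun x : ℝ => |x| ^ p) :=
    locallyIntegrable_of_norm_le_rpow (C := 1) (α := -p) (by simp) (by simp; linarith)
      (.of_forall fun x => by
        rw [norm_of_nonneg (rpow_nonneg (abs_nonneg x) p), neg_neg, one_mul, norm_eq_abs])
      (continuous_abs.measurable.pow_const p).aestronglyMeasurable
  exact (hloc.integrableOn_isCompact isCompact_uIcc).intervalIntegrable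

lemma integral_abs_rpow_of_nonneg {p b : ℝ} (hp : -1 < p) (hb : 0 ≤ b) :
    ∫ x in (0 : ℝ)..b, |x| ^ p = b ^ (p + 1) / (p + 1) := by
  rw [integral_congr (g := fun x => x ^ p) fun x hx => by
      rw [uIcc_of_le hb] at hx; simp only [abs_of_nonneg hx.1],
    integral_rpow (Or.inl hp), zero_rpow (by linarith), sub_zero]

lemma integral_abs_sub_rpow {p s t : ℝ} (hp : -1 < p) (hs : 0 ≤ s) (hst : s ≤ t) :
    ∫ u in (0 : ℝ)..t, |s - u| ^ p = (s ^ (p + 1) + (t - s) ^ (p + 1)) / (p + 1) := by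
  have hint := intervalIntegrable_abs_rpow hp
  have hneg : ∫ x in (s - t)..0, |x| ^ p = ∫ x in (0 : ℝ)..(t - s), |x| ^ p := by
    simpa using (integral_comp_neg (a := 0) (b := t - s) (fun x => |x| ^ p)).symm
  rw [integral_comp_sub_left (fun x => |x| ^ p), sub_zero,
    ← integral_add_adjacent_intervals (hint _ 0) (hint 0 s), hneg,
    integral_abs_rpow_of_nonneg hp (by linarith), integral_abs_rpow_of_nonneg hp hs]
  ring

lemma intervalIntegrable_sub_rpow {q : ℝ} (hq : -1 < q) (t : ℝ) :
    IntervalIntegrable (fun s : ℝ => (t - s) ^ q) volume 0 t := by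
  simpa using (intervalIntegrable_rpow' (a := 0) (b := t) hq).comp_sub_left t |>.symm

lemma integral_rpow_add_rpow_sub {p t : ℝ} (hp : -1 < p) :
    ∫ s in (0 : ℝ)..t, (s ^ (p + 1) + (t - s) ^ (p + 1)) / (p + 1)
      = 2 * t ^ (p + 2) / ((p + 1) * (p + 2)) := by
  have hp' : -1 < p + 1 := by linarith
  have hint : IntervalIntegrable (fun s : ℝ => s ^ (p + 1)) volume 0 t :=
    intervalIntegrable_rpow' hp'
  rw [intervalIntegral.integral_div, integral_add hint (intervalIntegrable_sub_rpow hp' t),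
    integral_comp_sub_left (fun x => x ^ (p + 1)), sub_self, sub_zero,
    integral_rpow (Or.inl hp'), zero_rpow (by linarith), show p + 1 + 1 = p + 2 by ring]
  field_simp
  ring

lemma integral_integral_le_of_le_abs_sub_rpow {F : ℝ → ℝ → ℝ} {C p t : ℝ} (hp : -1 < p)
    (ht : 0 ≤ t) (hF0 : ∀ s u, 0 ≤ F s u) (hF : ∀ s u, F s u ≤ C * |s - u| ^ p) :
    ∫ s in (0 : ℝ)..t, ∫ u in (0 : ℝ)..t, F s u
      ≤ C * (2 * t ^ (p + 2) / ((p + 1) * (p + 2))) := by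
  have hint := intervalIntegrable_abs_rpow hp
  have hinner : ∀ s ∈ Ioc 0 t, ∫ u in (0 : ℝ)..t, F s u
      ≤ C * ((s ^ (p + 1) + (t - s) ^ (p + 1)) / (p + 1)) := fun s hs => by
    have hg : IntervalIntegrable (fun u => |s - u| ^ p) volume 0 t := by
      simpa using (hint s (s - t)).comp_sub_left s
    rw [← integral_abs_sub_rpow hp hs.1.le hs.2, ← intervalIntegral.integral_const_mul]
    exact integral_mono_on_of_nonneg ht (fun u _ => hF0 s u) (hg.const_mul C) fun u _ => hF s u
  have hp' : -1 < p + 1 := by linarith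
  have hg : IntervalIntegrable (fun s => C * ((s ^ (p + 1) + (t - s) ^ (p + 1)) / (p + 1)))
      volume 0 t :=
    ((intervalIntegrable_rpow' hp').add (intervalIntegrable_sub_rpow hp' t)).div_const _
      |>.const_mul C
  calc ∫ s in (0 : ℝ)..t, ∫ u in (0 : ℝ)..t, F s u
      ≤ ∫ s in (0 : ℝ)..t, C * ((s ^ (p + 1) + (t - s) ^ (p + 1)) / (p + 1)) :=
        integral_mono_on_of_nonneg ht
          (fun s _ => integral_nonneg ht fun u _ => hF0 s u) hg hinner
    _ = C * (2 * t ^ (p + 2) / ((p + 1) * (p + 2))) := by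
        rw [intervalIntegral.integral_const_mul, integral_rpow_add_rpow_sub hp]

end IntervalIntegrals

lemma exponent_identities_of_kappa_eq {β γ κ : ℝ} (hβ : β ≠ 0) (hβγ : β + γ - 1 ≠ 0)
    (hden : 2 * β + γ - 1 ≠ 0) (hκ : κ = 2 * β / (2 * β + γ - 1)) :
    -(1 - γ) / β + 2 = 2 / κ ∧
      2 / ((-(1 - γ) / β + 1) * (-(1 - γ) / β + 2)) = κ ^ 2 / (2 - κ) := by
  have hp1 : -(1 - γ) / β + 1 = (β + γ - 1) / β := by field_simp; ring
  have hp2 : -(1 - γ) / β + 2 = (2 * β + γ - 1) / β := by field_simp; ring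
  have h2κ : 2 - κ = 2 * (β + γ - 1) / (2 * β + γ - 1) := by rw [hκ]; field_simp; ring
  rw [hp1, hp2, h2κ, hκ]
  constructor
  · field_simp
  · field_simp

theorem stmt_9_general (d : ℕ) (hd : 1 ≤ d) (μ β γ κ : ℝ) (hμ : 0 < μ) (hβ0 : 0 < β)
    (hγ1 : γ < 1) (hβγ : 1 < β + γ)
    (hκ : κ = 2 * β / (2 * β + γ - 1))
    (a : EuclideanSpace ℝ (Fin d) → ℝ) (ha0 : ∀ p, 0 ≤ a p)
    (haB : ∃ C, ∀ p, a p ≤ C)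
    (K₁ : ℝ) (hK₁ : K₁ = unitSphereArea d *
      ∫ ρ in Set.Ioi (0 : ℝ), Real.exp (-(μ * ρ ^ (2 * β))) * ρ ^ (1 - 2 * γ))
    (ε t : ℝ) (hε : ε ∈ Set.Ioc (0 : ℝ) 1) (ht : 0 < t) :
    (ε ^ (2 - 2 * κ) *
        ∫ s in (0 : ℝ)..t, ∫ u in (0 : ℝ)..t, ∫ w : EuclideanSpace ℝ (Fin d),
          Real.exp (-(μ * ‖w‖ ^ (2 * β) * |s - u| / ε ^ κ)) * a w / ‖w‖ ^ (2 * γ + d - 2)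
      = ∫ s in (0 : ℝ)..t, ∫ u in (0 : ℝ)..t, ∫ w : EuclideanSpace ℝ (Fin d),
          Real.exp (-(μ * ‖w‖ ^ (2 * β))) / ‖w‖ ^ (2 * γ + d - 2)
            * a ((ε ^ (κ / (2 * β)) / |s - u| ^ (1 / (2 * β))) • w)
            * |s - u| ^ (-(1 - γ) / β)) ∧
    ε ^ (2 - 2 * κ) *
        (∫ s in (0 : ℝ)..t, ∫ u in (0 : ℝ)..t, ∫ w : EuclideanSpace ℝ (Fin d),
          Real.exp (-(μ * ‖w‖ ^ (2 * β) * |s - u| / ε ^ κ)) * a w / ‖w‖ ^ (2 * γ + d - 2))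
      ≤ (⨆ p, a p) * K₁ * (κ ^ 2 / (2 - κ)) * t ^ (2 / κ) ∧
    (∫ s in (0 : ℝ)..t, ∫ u in (0 : ℝ)..t, ∫ w : EuclideanSpace ℝ (Fin d),
          Real.exp (-(μ * ‖w‖ ^ (2 * β))) / ‖w‖ ^ (2 * γ + d - 2)
            * a ((ε ^ (κ / (2 * β)) / |s - u| ^ (1 / (2 * β))) • w)
            * |s - u| ^ (-(1 - γ) / β))
      ≤ (⨆ p, a p) * K₁ * (κ ^ 2 / (2 - κ)) * t ^ (2 / κ) := by
  have : Nontrivial (EuclideanSpace ℝ (Fin d)) :=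
    Module.nontrivial_of_finrank_pos (R := ℝ) (by rw [finrank_euclideanSpace_fin]; omega)
  have hden : 2 * β + γ - 1 ≠ 0 := by linarith
  have hp : -1 < -(1 - γ) / β := by
    rw [neg_div, neg_lt_neg_iff, div_lt_one hβ0]; linarith
  obtain ⟨C, hC⟩ := haB
  have hM : ∀ w, a w ≤ ⨆ q, a q := le_ciSup ⟨C, by rintro _ ⟨q, rfl⟩; exact hC q⟩
  have hK : K₁ = ∫ w : EuclideanSpace ℝ (Fin d), radialWeight μ β γ w := by
    rw [hK₁, integral_radialWeight, unitSphereArea, finrank_euclideanSpace_fin, measureReal_def]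
  simp only [← radialWeight_euclideanSpace]
  have conj : ∀ {L R X : ℝ}, L = R → R ≤ X → L = R ∧ L ≤ X ∧ R ≤ X :=
    fun hLR hRX => ⟨hLR, hLR.trans_le hRX, hRX⟩
  refine conj ?_ ?_
  · simp only [← intervalIntegral.integral_const_mul]
    refine integral_integral_congr_of_ne fun s u hsu => ?_
    simpa only [finrank_euclideanSpace_fin] using
      integral_exp_div_rpow_eq_integral_radialWeight volume a hβ0.ne' hden hκ hε.1
        (abs_pos.2 (sub_ne_zero.2 hsu))
  · obtain ⟨hexp, hcoef⟩ := exponent_identities_of_kappa_eq hβ0.ne' (by linarith) hden hκ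
    refine (integral_integral_le_of_le_abs_sub_rpow (C := (⨆ q, a q) * K₁) hp ht.le
      (fun s u => ?_) (fun s u => ?_)).trans_eq ?_
    · exact integral_nonneg fun w =>
        mul_nonneg (mul_nonneg (radialWeight_nonneg μ β γ w) (ha0 _)) (by positivity)
    · rw [integral_mul_const, hK]
      exact mul_le_mul_of_nonneg_right
        (integral_radialWeight_mul_le (integrable_radialWeight volume hμ hβ0 hγ1)
          (fun _ => ha0 _) fun _ => hM _) (by positivity)
    · rw [← hcoef, hexp]
      ring

/-- The key rescaling identity and uniform-in-`ε` bound behind the moment estimate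
(Lemma 2.1): the change of variables `w ↦ ε^{κ/2β}|s-u|^{-1/2β} w` transforms
`ε^{2-2κ} ∫_{[0,t]²}∫_{ℝ^d} e^{-μ|w|^{2β}|s-u|/ε^κ} a(w)/|w|^{2γ+d-2}` into an
expression bounded by `(sup a)·K₁·(κ²/(2-κ))·t^{2/κ}`, uniformly in `ε ∈ (0,1]`. -/
theorem stmt_9 (d : ℕ) (hd : 1 ≤ d) (μ β γ κ : ℝ) (hμ : 0 < μ) (hβ0 : 0 < β)
    (hβ1 : β < 1) (hγ0 : 0 < γ) (hγ1 : γ < 1) (hβγ : 1 < β + γ)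
    (hκ : κ = 2 * β / (2 * β + γ - 1))
    (a : EuclideanSpace ℝ (Fin d) → ℝ) (ha0 : ∀ p, 0 ≤ a p)
    (haB : ∃ C, ∀ p, a p ≤ C) (haM : Measurable a)
    (K₁ : ℝ) (hK₁ : K₁ = unitSphereArea d *
      ∫ ρ in Set.Ioi (0 : ℝ), Real.exp (-(μ * ρ ^ (2 * β))) * ρ ^ (1 - 2 * γ))
    (ε t : ℝ) (hε : ε ∈ Set.Ioc (0 : ℝ) 1) (ht : 0 < t) :
    (ε ^ (2 - 2 * κ) *
        ∫ s in (0 : ℝ)..t, ∫ u in (0 : ℝ)..t, ∫ w : EuclideanSpace ℝ (Fin d),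
          Real.exp (-(μ * ‖w‖ ^ (2 * β) * |s - u| / ε ^ κ)) * a w / ‖w‖ ^ (2 * γ + d - 2)
      = ∫ s in (0 : ℝ)..t, ∫ u in (0 : ℝ)..t, ∫ w : EuclideanSpace ℝ (Fin d),
          Real.exp (-(μ * ‖w‖ ^ (2 * β))) / ‖w‖ ^ (2 * γ + d - 2)
            * a ((ε ^ (κ / (2 * β)) / |s - u| ^ (1 / (2 * β))) • w)
            * |s - u| ^ (-(1 - γ) / β)) ∧
    ε ^ (2 - 2 * κ) *
        (∫ s in (0 : ℝ)..t, ∫ u in (0 : ℝ)..t, ∫ w : EuclideanSpace ℝ (Fin d),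
          Real.exp (-(μ * ‖w‖ ^ (2 * β) * |s - u| / ε ^ κ)) * a w / ‖w‖ ^ (2 * γ + d - 2))
      ≤ (⨆ p, a p) * K₁ * (κ ^ 2 / (2 - κ)) * t ^ (2 / κ) ∧
    (∫ s in (0 : ℝ)..t, ∫ u in (0 : ℝ)..t, ∫ w : EuclideanSpace ℝ (Fin d),
          Real.exp (-(μ * ‖w‖ ^ (2 * β))) / ‖w‖ ^ (2 * γ + d - 2)
            * a ((ε ^ (κ / (2 * β)) / |s - u| ^ (1 / (2 * β))) • w)
            * |s - u| ^ (-(1 - γ) / β))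
      ≤ (⨆ p, a p) * K₁ * (κ ^ 2 / (2 - κ)) * t ^ (2 / κ) :=
  stmt_9_general d hd μ β γ κ hμ hβ0 hγ1 hβγ hκ a ha0 haB K₁ hK₁ ε t hε ht
end
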